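/- In a pure exchange economy with consumers i ∈ I having closed convex consumption sets X_i ⊆ ℝ^M, endowments e_i ∈ int X_i, continuous quasiconcave utilities u_i that are non-satiable on the rational allocations, if (p̄, ȳ) solves the quasi-variational inequality: p̄ ∈ P = {p : ‖p‖ ≤ 1}, ȳᵢ ∈ M_i(p̄) = {y_i ∈ X_i | ⟨p̄, y_i - e_i⟩ ≤ 1 - ‖p̄‖} for each i, and there exists ȳ* with ȳᵢ* ∈ N^a_{-u_i}(ȳᵢ) \ {0} such that ⟨Σᵢ(e_i - ȳᵢ), p - p̄⟩ + ⟨ȳ*, y - ȳ⟩ ≥ 0 for all p ∈ P and all y ∈ Πᵢ M_i(p̄), then Σᵢ(ȳᵢ - e_i) = 0 (market clearing). -/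
import Mathlib


open RealInnerProductSpace

def Slev {M : ℕ} (C : Set (EuclideanSpace ℝ (Fin M))) (f : EuclideanSpace ℝ (Fin M) → ℝ)
    (w : EuclideanSpace ℝ (Fin M)) : Set (EuclideanSpace ℝ (Fin M)) :=
  {v ∈ C | f v ≤ f w}

def SlevLt {M : ℕ} (C : Set (EuclideanSpace ℝ (Fin M))) (f : EuclideanSpace ℝ (Fin M) → ℝ)
    (w : EuclideanSpace ℝ (Fin M)) : Set (EuclideanSpace ℝ (Fin M)) :=
  {v ∈ C | f v < f w}

open Classical in
noncomputable def SlevAdj {M : ℕ} (C : Set (EuclideanSpace ℝ (Fin M)))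
    (f : EuclideanSpace ℝ (Fin M) → ℝ) (w : EuclideanSpace ℝ (Fin M)) :
    Set (EuclideanSpace ℝ (Fin M)) :=
  if ∀ v ∈ C, f w ≤ f v then Slev C f w
  else Slev C f w ∩ {x | Metric.infDist x (SlevLt C f w) ≤ Metric.infDist w (SlevLt C f w)}

noncomputable def NormAdj {M : ℕ} (C : Set (EuclideanSpace ℝ (Fin M)))
    (f : EuclideanSpace ℝ (Fin M) → ℝ) (w : EuclideanSpace ℝ (Fin M)) :
    Set (EuclideanSpace ℝ (Fin M)) :=
  {ws | ∀ v ∈ SlevAdj C f w, ⟪ws, v - w⟫ ≤ 0}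

/-- In a pure exchange economy, a solution of the quasi-variational inequality (QVI)
clears the market: `∑ i, (ȳ i - e i) = 0`. -/
theorem stmt_9 (M : ℕ) (ι : Type) [Fintype ι] [Nonempty ι]
    (X : ι → Set (EuclideanSpace ℝ (Fin M))) (e : ι → EuclideanSpace ℝ (Fin M))
    (u : ι → EuclideanSpace ℝ (Fin M) → ℝ)
    (hXcl : ∀ i, IsClosed (X i)) (hXcv : ∀ i, Convex ℝ (X i))
    (he : ∀ i, e i ∈ interior (X i))
    (hucont : ∀ i, Continuous (u i))
    (huqc : ∀ i, ∀ w ∈ X i, ∀ v ∈ X i, ∀ t ∈ Set.Icc (0 : ℝ) 1,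
      u i (t • w + (1 - t) • v) ≥ min (u i w) (u i v))
    -- non-satiability of `u i` on the projection of the set of rational allocations
    (hns : ∀ i, ∀ x : EuclideanSpace ℝ (Fin M),
      (∃ y : ι → EuclideanSpace ℝ (Fin M), (∀ j, y j ∈ X j) ∧ (∑ j, (y j - e j)) = 0 ∧
        (∀ j, u j (y j) ≥ u j (e j)) ∧ y i = x) →
      ∃ z ∈ X i, u i z > u i x)
    (pbar : EuclideanSpace ℝ (Fin M)) (hpbar : ‖pbar‖ ≤ 1)
    (ybar : ι → EuclideanSpace ℝ (Fin M))
    (hybar : ∀ i, ybar i ∈ X i ∧ ⟪pbar, ybar i - e i⟫ ≤ 1 - ‖pbar‖)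
    (ystar : ι → EuclideanSpace ℝ (Fin M))
    (hystar : ∀ i, ystar i ∈ NormAdj (X i) (fun x => -u i x) (ybar i) ∧ ystar i ≠ 0)
    (hQVI : ∀ p : EuclideanSpace ℝ (Fin M), ‖p‖ ≤ 1 →
      ∀ y : ι → EuclideanSpace ℝ (Fin M),
        (∀ i, y i ∈ X i ∧ ⟪pbar, y i - e i⟫ ≤ 1 - ‖pbar‖) →
        ⟪∑ i, (e i - ybar i), p - pbar⟫ + ∑ i, ⟪ystar i, y i - ybar i⟫ ≥ 0) :
    ∑ i, (ybar i - e i) = 0 := by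
  by_contra hz
  set z := ∑ i, (ybar i - e i) with hzdef
  have hznorm : (0:ℝ) < ‖z‖ := norm_pos_iff.mpr hz
  have hpnorm : ‖(‖z‖⁻¹ • z : EuclideanSpace ℝ (Fin M))‖ ≤ 1 := by
    rw [norm_smul, norm_inv, norm_norm, inv_mul_cancel₀ (ne_of_gt hznorm)]
  have h1 := hQVI (‖z‖⁻¹ • z) hpnorm ybar hybar
  have hEz : ∑ i, (e i - ybar i) = -z := by
    rw [hzdef, ← Finset.sum_neg_distrib]
    exact Finset.sum_congr rfl (fun i _ => by rw [neg_sub])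
  rw [hEz] at h1
  simp only [sub_self, inner_zero_right, Finset.sum_const_zero, add_zero] at h1
  rw [inner_neg_left, inner_sub_right, real_inner_smul_right,
    real_inner_self_eq_norm_sq] at h1
  have hzz : ‖z‖⁻¹ * ‖z‖ ^ 2 = ‖z‖ := by
    field_simp
  rw [hzz] at h1
  have h2 : ‖z‖ ≤ ⟪z, pbar⟫ := by linarith
  have h3 : ⟪z, pbar⟫ ≤ ‖z‖ * ‖pbar‖ := real_inner_le_norm z pbar
  have hp1 : ‖pbar‖ = 1 := by nlinarith
  have h4 : ⟪pbar, z⟫ ≤ 0 := by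
    rw [hzdef, inner_sum]
    apply Finset.sum_nonpos
    intro i _
    have := (hybar i).2
    rw [hp1] at this; linarith
  rw [real_inner_comm] at h4
  linarith
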